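/- More precisely: the k-th term of the p-Zassenhaus filtration of U_{n+1}(F_p) is contained in the subgroup U_{n,k} of unipotent matrices 1 + a with a_{ij} = 0 whenever j - i ≤ k - 1. -/

import Mathlib

/-- The subgroup generated by `p`-th powers of elements of `H`. -/
def Subgroup.pPow {G : Type*} [Group G] (H : Subgroup G) (p : ℕ) : Subgroup G :=
  Subgroup.closure {x : G | ∃ h ∈ H, x = h ^ p}

/-- The `p`-Zassenhaus filtration of a group `G`: `zassenhaus p hp G m` is `G_{(m)}`
(with the convention that the value at `0` is `⊤`). -/
def zassenhaus (p : ℕ) (hp : 2 ≤ p) (G : Type*) [Group G] : ℕ → Subgroup G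
  | 0 => ⊤
  | 1 => ⊤
  | (m + 2) =>
      (zassenhaus p hp G ((m + 1) / p + 1)).pPow p ⊔
        ⨆ i : Fin (m + 1),
          ⁅zassenhaus p hp G ((i : ℕ) + 1), zassenhaus p hp G (m + 1 - (i : ℕ))⁆
  decreasing_by
  · exact Nat.succ_lt_succ (Nat.div_lt_self (by omega) (by omega))
  · have := i.isLt; omega
  · have := i.isLt; omega


namespace ZassPaper

abbrev Mat (p n : ℕ) := Matrix (Fin (n + 1)) (Fin (n + 1)) (ZMod p)

/-- `memV p n d a` : the strictly upper triangular matrix `a` has all entries vanishing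
at superdiagonal distance `< d`, i.e. `a i j = 0` whenever `j - i ≤ d - 1`. -/
def memV (p n d : ℕ) (a : Mat p n) : Prop :=
  ∀ i j : Fin (n + 1), (j : ℕ) < (i : ℕ) + d → a i j = 0

lemma memV_mono (p n : ℕ) {d e : ℕ} (h : e ≤ d) {a : Mat p n} (ha : memV p n d a) :
    memV p n e a := fun i j hij => ha i j (by omega)

lemma memV_zero (p n d : ℕ) : memV p n d 0 := fun _ _ _ => rfl

lemma memV_add (p n : ℕ) {d : ℕ} {a b : Mat p n} (ha : memV p n d a) (hb : memV p n d b) :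
    memV p n d (a + b) := by
  intro i j h
  simp [Matrix.add_apply, ha i j h, hb i j h]

lemma memV_mul (p n : ℕ) {d e : ℕ} {a b : Mat p n} (ha : memV p n d a) (hb : memV p n e b) :
    memV p n (d + e) (a * b) := by
  intro i j h
  rw [Matrix.mul_apply]
  apply Finset.sum_eq_zero
  intro k _
  by_cases hk : (k : ℕ) < (i : ℕ) + d
  · rw [ha i k hk, zero_mul]
  · rw [hb k j (by omega), mul_zero]

variable (p n : ℕ) [Fact p.Prime]

def UTset : Set (GL (Fin (n + 1)) (ZMod p)) :=
  {A | ∃ a : Mat p n, memV p n 1 a ∧ (A : Mat p n) = 1 + a}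

lemma UTset_one : (1 : GL (Fin (n + 1)) (ZMod p)) ∈ UTset p n :=
  ⟨0, memV_zero p n 1, by simp⟩

lemma UTset_mul {A B : GL (Fin (n + 1)) (ZMod p)} (hA : A ∈ UTset p n) (hB : B ∈ UTset p n) :
    A * B ∈ UTset p n := by
  obtain ⟨a, ha, hA⟩ := hA
  obtain ⟨b, hb, hB⟩ := hB
  refine ⟨a + b + a * b, ?_, ?_⟩
  · exact memV_add p n (memV_add p n ha hb)
      (memV_mono p n (by omega) (memV_mul p n ha hb))
  · show ((A * B : GL (Fin (n + 1)) (ZMod p)) : Mat p n) = _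
    rw [Units.val_mul, hA, hB]
    noncomm_ring

lemma UTset_pow {A : GL (Fin (n + 1)) (ZMod p)} (hA : A ∈ UTset p n) (k : ℕ) :
    A ^ k ∈ UTset p n := by
  induction k with
  | zero => simpa using UTset_one p n
  | succ k ih => rw [pow_succ]; exact UTset_mul p n ih hA

lemma UTset_inv {A : GL (Fin (n + 1)) (ZMod p)} (hA : A ∈ UTset p n) :
    A⁻¹ ∈ UTset p n := by
  have h1 : A ^ Fintype.card (GL (Fin (n + 1)) (ZMod p)) = 1 := pow_card_eq_one
  have hc : 0 < Fintype.card (GL (Fin (n + 1)) (ZMod p)) := Fintype.card_pos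
  have : A⁻¹ = A ^ (Fintype.card (GL (Fin (n + 1)) (ZMod p)) - 1) := by
    have : A * A ^ (Fintype.card (GL (Fin (n + 1)) (ZMod p)) - 1) = 1 := by
      rw [← pow_succ', Nat.sub_add_cancel hc]
      exact h1
    exact ((inv_eq_of_mul_eq_one_right this).symm).symm
  rw [this]
  exact UTset_pow p n hA _

/-- The group of upper triangular unipotent `(n+1)×(n+1)` matrices over `F_p`,
as a subgroup of `GL (Fin (n+1)) (ZMod p)`. -/
def UT : Subgroup (GL (Fin (n + 1)) (ZMod p)) where
  carrier := UTset p n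
  one_mem' := UTset_one p n
  mul_mem' := UTset_mul p n
  inv_mem' := UTset_inv p n

end ZassPaper

/-!
The subgroups `U_{n,d}` satisfy `⁅U_{n,d}, U_{n,e}⁆ ≤ U_{n,d+e}` (the commutator of `1 + a` and
`1 + b` is `1 + (ab - ba)(1 + a)⁻¹(1 + b)⁻¹`) and `U_{n,d}^p ≤ U_{n,pd}` (in characteristic `p`,
`(1 + a)^p = 1 + a^p`). Hence they satisfy the inclusions that recursively define the
Zassenhaus filtration, and `G_{(k)} ≤ U_{n,k}` follows by strong induction on `k`.
-/

namespace ZassPaper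

section memV

variable (p n : ℕ)

lemma memV_neg {d : ℕ} {a : Mat p n} (ha : memV p n d a) : memV p n d (-a) := by
  intro i j h
  simp [ha i j h]

lemma memV_sub {d : ℕ} {a b : Mat p n} (ha : memV p n d a) (hb : memV p n d b) :
    memV p n d (a - b) := by
  simpa only [sub_eq_add_neg] using memV_add p n ha (memV_neg p n hb)

lemma memV_zero_one : memV p n 0 (1 : Mat p n) :=
  fun _ _ h => Matrix.one_apply_ne (by omega)

lemma memV_pow {d : ℕ} {a : Mat p n} (ha : memV p n d a) (k : ℕ) :
    memV p n (d * k) (a ^ k) := by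
  induction k with
  | zero => exact memV_zero_one p n
  | succ k ih => simpa only [pow_succ, Nat.mul_succ] using memV_mul p n ih ha

lemma memV_mul_sub_one {d : ℕ} {x y : Mat p n} (hx : memV p n d (x - 1))
    (hy : memV p n d (y - 1)) : memV p n d (x * y - 1) := by
  have h : x * y - 1 = (x - 1) + (y - 1) + (x - 1) * (y - 1) := by noncomm_ring
  rw [h]
  exact memV_add p n (memV_add p n hx hy) (memV_mono p n (Nat.le_add_right d d) (memV_mul p n hx hy))

lemma memV_sub_one_of_mul_eq_one {d : ℕ} {x y : Mat p n} (hx : memV p n d (x - 1))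
    (hy : memV p n 0 y) (hxy : x * y = 1) : memV p n d (y - 1) := by
  have h : y - 1 = -((x - 1) * y) := by rw [sub_mul, hxy]; noncomm_ring
  rw [h]
  simpa using memV_neg p n (memV_mul p n hx hy)

lemma memV_commutator_sub_one {d e : ℕ} {x y z : Mat p n} (hx : memV p n d (x - 1))
    (hy : memV p n e (y - 1)) (hz : memV p n 0 z) (hyxz : y * x * z = 1) :
    memV p n (d + e) (x * y * z - 1) := by
  have h : x * y * z - 1 = ((x - 1) * (y - 1) - (y - 1) * (x - 1)) * z := by
    have hxy : (x - 1) * (y - 1) - (y - 1) * (x - 1) = x * y - y * x := by noncomm_ring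
    rw [hxy, sub_mul, hyxz]
  rw [h]
  simpa using memV_mul p n
    (memV_sub p n (memV_mul p n hx hy) (add_comm e d ▸ memV_mul p n hy hx)) hz

lemma memV_pow_char_sub_one [Fact p.Prime] {d : ℕ} {x : Mat p n} (hx : memV p n d (x - 1)) :
    memV p n (p * d) (x ^ p - 1) := by
  have h : x ^ p - 1 = (x - 1) ^ p := by
    rw [sub_pow_char_of_commute _ (Commute.one_right x), one_pow]
  rw [h, mul_comm]
  exact memV_pow p n hx p

end memV

variable {p n : ℕ} [Fact p.Prime]

variable (p n) in
def toMat : UT p n →* Mat p n :=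
  (Units.coeHom (Mat p n)).comp (UT p n).subtype

lemma memV_zero_toMat (g : UT p n) : memV p n 0 (toMat p n g) := by
  obtain ⟨a, ha, hg⟩ := g.2
  rw [toMat, MonoidHom.comp_apply, Subgroup.coe_subtype, Units.coeHom_apply, hg]
  exact memV_add p n (memV_zero_one p n) (memV_mono p n (Nat.zero_le 1) ha)

lemma toMat_mul_toMat_inv (g : UT p n) : toMat p n g * toMat p n g⁻¹ = 1 := by
  rw [← map_mul, mul_inv_cancel, map_one]

variable (p n) in
/-- `U_{n,k}`, as a subgroup of `U_{n+1}(F_p)`. -/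
def UTLevel (k : ℕ) : Subgroup (UT p n) where
  carrier := {g | memV p n k (toMat p n g - 1)}
  one_mem' := by simpa using memV_zero p n k
  mul_mem' {g h} hg hh := by
    show memV p n k (toMat p n (g * h) - 1)
    rw [map_mul]
    exact memV_mul_sub_one p n hg hh
  inv_mem' {g} hg := memV_sub_one_of_mul_eq_one p n hg (memV_zero_toMat g⁻¹) (toMat_mul_toMat_inv g)

lemma mem_UTLevel_iff {k : ℕ} {g : UT p n} :
    g ∈ UTLevel p n k ↔ memV p n k (toMat p n g - 1) := Iff.rfl

lemma UTLevel_one_eq_top : UTLevel p n 1 = ⊤ := by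
  refine eq_top_iff.2 fun g _ => ?_
  obtain ⟨a, ha, hg⟩ := g.2
  simpa [mem_UTLevel_iff, toMat, hg] using ha

lemma UTLevel_antitone : Antitone (UTLevel p n) :=
  fun _ _ hde _ hg => memV_mono p n hde hg

open scoped commutatorElement in
lemma commutatorElement_mem_UTLevel {d e : ℕ} {g h : UT p n}
    (hg : g ∈ UTLevel p n d) (hh : h ∈ UTLevel p n e) : ⁅g, h⁆ ∈ UTLevel p n (d + e) := by
  have hgh : ⁅g, h⁆ = g * h * (h * g)⁻¹ := by group
  rw [mem_UTLevel_iff, hgh, map_mul, map_mul]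
  refine memV_commutator_sub_one p n hg hh (memV_zero_toMat _) ?_
  rw [← map_mul, toMat_mul_toMat_inv]

lemma commutator_le_UTLevel {d e : ℕ} {H K : Subgroup (UT p n)} (hH : H ≤ UTLevel p n d)
    (hK : K ≤ UTLevel p n e) : ⁅H, K⁆ ≤ UTLevel p n (d + e) :=
  Subgroup.commutator_le.2 fun _ hg _ hh => commutatorElement_mem_UTLevel (hH hg) (hK hh)

lemma pPow_le_UTLevel {d : ℕ} {H : Subgroup (UT p n)} (hH : H ≤ UTLevel p n d) :
    H.pPow p ≤ UTLevel p n (p * d) := by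
  rw [Subgroup.pPow, Subgroup.closure_le]
  rintro _ ⟨g, hg, rfl⟩
  rw [SetLike.mem_coe, mem_UTLevel_iff, map_pow]
  exact memV_pow_char_sub_one p n (hH hg)

lemma zassenhaus_le_UTLevel (k : ℕ) :
    zassenhaus p (Fact.out : p.Prime).two_le (UT p n) k ≤ UTLevel p n k := by
  induction k using Nat.strong_induction_on with
  | _ k ih =>
    match k with
    | 0 | 1 =>
      rw [zassenhaus]
      exact UTLevel_one_eq_top.ge.trans (UTLevel_antitone (by omega))
    | m + 2 =>
      rw [zassenhaus]
      refine sup_le ?_ (iSup_le fun i => ?_)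
      · have hlt : (m + 1) / p < m + 1 := Nat.div_lt_self m.succ_pos (Fact.out : p.Prime).one_lt
        have hle : m + 2 ≤ p * ((m + 1) / p + 1) :=
          Nat.lt_mul_div_succ (m + 1) (Fact.out : p.Prime).pos
        exact (pPow_le_UTLevel (ih _ (by omega))).trans (UTLevel_antitone hle)
      · have hi := i.isLt
        have hsum : (i : ℕ) + 1 + (m + 1 - i) = m + 2 := by omega
        exact hsum ▸ commutator_le_UTLevel (ih _ (by omega)) (ih _ (by omega))

theorem stmt6_general (p n k : ℕ) [Fact p.Prime] :
    ∀ g : UT p n, g ∈ zassenhaus p (Fact.out : p.Prime).two_le (UT p n) k →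
      ∃ a : Mat p n, memV p n k a ∧ ((g : GL (Fin (n + 1)) (ZMod p)) : Mat p n) = 1 + a :=
  fun g hg => ⟨toMat p n g - 1, zassenhaus_le_UTLevel k hg, (add_sub_cancel _ _).symm⟩

/-- The `k`-th term of the `p`-Zassenhaus filtration of `U_{n+1}(F_p)` is contained
in `U_{n,k} = {1 + a : a ∈ V_k}`. -/
theorem stmt6 (p n k : ℕ) [Fact p.Prime] (hn : 1 ≤ n) (hk : 1 ≤ k) :
    ∀ g : UT p n, g ∈ zassenhaus p (Fact.out : p.Prime).two_le (UT p n) k →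
      ∃ a : Mat p n, memV p n k a ∧ ((g : GL (Fin (n + 1)) (ZMod p)) : Mat p n) = 1 + a :=
  stmt6_general p n k

end ZassPaper
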